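/- arXiv:2504.19241 — 2 statements merged into one kernel-verified Lean document; each statement's English description precedes it below -/
import Mathlib

section
/- Let R be an abelian semi-regular ring. Then every maximal left ideal of R is a prime (two-sided) ideal of R, and likewise every maximal right ideal of R is a prime (two-sided) ideal of R. -/
/-- A ring is *abelian* if every idempotent is central. -/
def IsAbelianRing (R : Type*) [Ring R] : Prop :=
  ∀ e : R, IsIdempotentElem e → ∀ a : R, e * a = a * e

/-- A ring `R` is *semi-regular* if `R/J(R)` is von Neumann regular (for every `a` there is
`b` with `a - a*b*a ∈ J(R)`) and idempotents lift modulo the Jacobson radical `J(R)`. -/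
def IsSemiregularRing (R : Type*) [Ring R] : Prop :=
  (∀ a : R, ∃ b : R, a - a * b * a ∈ (⊥ : Ideal R).jacobson) ∧
  ∀ a : R, a * a - a ∈ (⊥ : Ideal R).jacobson →
    ∃ e : R, IsIdempotentElem e ∧ e - a ∈ (⊥ : Ideal R).jacobson

/-- The Jacobson radical `J(R)` is nilpotent: there is `n > 0` such that every product of `n`
elements of `J(R)` vanishes (i.e. `J(R)^n = 0`). -/
def JacobsonNilpotent (R : Type*) [Ring R] : Prop :=
  ∃ n : ℕ, 0 < n ∧ ∀ l : List R, l.length = n →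
    (∀ x ∈ l, x ∈ (⊥ : Ideal R).jacobson) → l.prod = 0

/-!
Write `J` for the Jacobson radical. Given `a`, von Neumann regularity modulo `J` gives `b` with
`a ≡ a b a`, so `b a` is idempotent modulo `J` and lifts to an idempotent `e` with `e ≡ b a`
and `a ≡ a e`. If `a` lies in a left ideal `I ⊇ J`, then so does `e`, and since `e` is central,
`a r = (a r) e + (a - a e) r ∈ I`: every left ideal containing `J` is two-sided. A maximal left
ideal contains `J`, and a two-sided maximal left ideal `M` is even completely prime: if `a ∉ M`
then `1 = y a + m` with `m ∈ M`, so `b = y (a b) + m b`. Maximal right ideals are maximal left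
ideals of `Rᵐᵒᵖ`, which is again abelian and semi-regular because `J` is left-right symmetric.
-/

open MulOpposite

section Ring

variable {R : Type*} [Ring R]

-- Jacobson's lemma, as the case `r = 1` of `spectrum.unit_mem_mul_comm` over `ℤ`.
theorem isUnit_one_sub_mul_comm {a b : R} : IsUnit (1 - a * b) ↔ IsUnit (1 - b * a) :=
  not_iff_not.1 <| by
    simpa [spectrum.mem_iff] using spectrum.unit_mem_mul_comm (R := ℤ) (a := a) (b := b) (r := 1)

theorem isUnit_one_add_mul_comm {a b : R} : IsUnit (1 + a * b) ↔ IsUnit (1 + b * a) := by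
  simpa using isUnit_one_sub_mul_comm (a := -a) (b := b)

theorem Ideal.isUnit_one_add_of_mem_jacobson_bot {t : R} (ht : t ∈ (⊥ : Ideal R).jacobson) :
    IsUnit (1 + t) := by
  obtain ⟨s, hs⟩ := Ideal.exists_mul_add_sub_mem_of_mem_jacobson t ht
  rw [Ideal.mem_bot, sub_eq_zero] at hs
  have hs_sub_one : s - 1 ∈ (⊥ : Ideal R).jacobson := by
    have : s - 1 = -(s * t) := by rw [← hs]; noncomm_ring
    exact this ▸ neg_mem (Ideal.mul_mem_left _ s ht)
  obtain ⟨w, hw⟩ := Ideal.exists_mul_sub_mem_of_sub_one_mem_jacobson s hs_sub_one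
  rw [Ideal.mem_bot, sub_eq_zero] at hw
  have hw_eq : w = t + 1 := by
    calc w = w * (s * (t + 1)) := by rw [hs, mul_one]
      _ = t + 1 := by rw [← mul_assoc, hw, one_mul]
  rw [add_comm]
  exact isUnit_iff_exists.2 ⟨s, hw_eq ▸ hw, hs⟩

theorem Ideal.mem_jacobson_bot_iff_forall_isUnit {x : R} :
    x ∈ (⊥ : Ideal R).jacobson ↔ ∀ y, IsUnit (1 + y * x) := by
  refine ⟨fun hx y => isUnit_one_add_of_mem_jacobson_bot (Ideal.mul_mem_left _ y hx),
    fun h => Ideal.mem_jacobson_iff.2 fun y => ?_⟩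
  obtain ⟨u, hu⟩ := h y
  refine ⟨↑u⁻¹, ?_⟩
  rw [Ideal.mem_bot, sub_eq_zero, mul_assoc, ← mul_add_one, add_comm, ← hu, Units.inv_mul]

theorem Ideal.op_mem_jacobson_bot_iff {x : R} :
    op x ∈ (⊥ : Ideal Rᵐᵒᵖ).jacobson ↔ x ∈ (⊥ : Ideal R).jacobson := by
  simp only [mem_jacobson_bot_iff_forall_isUnit, op_surjective.forall, ← op_mul, ← op_one,
    ← op_add, isUnit_op, isUnit_one_add_mul_comm]

theorem IsAbelianRing.op (h : IsAbelianRing R) : IsAbelianRing Rᵐᵒᵖ := by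
  intro e he a
  have he' : IsIdempotentElem e.unop := congrArg unop he
  exact unop_injective (h e.unop he' a.unop).symm

theorem IsSemiregularRing.op (h : IsSemiregularRing R) : IsSemiregularRing Rᵐᵒᵖ := by
  refine ⟨op_surjective.forall.2 fun a => ?_, op_surjective.forall.2 fun a ha => ?_⟩
  · obtain ⟨b, hb⟩ := h.1 a
    refine ⟨MulOpposite.op b, ?_⟩
    rwa [← op_mul, ← op_mul, ← op_sub, Ideal.op_mem_jacobson_bot_iff, ← mul_assoc]
  · rw [← op_mul, ← op_sub, Ideal.op_mem_jacobson_bot_iff] at ha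
    obtain ⟨e, he, heJ⟩ := h.2 a ha
    refine ⟨MulOpposite.op e, congrArg MulOpposite.op he, ?_⟩
    rwa [← op_sub, Ideal.op_mem_jacobson_bot_iff]

theorem IsSemiregularRing.exists_isIdempotentElem_sub_mul_mem_jacobson
    (h : IsSemiregularRing R) (a : R) :
    ∃ e b : R, IsIdempotentElem e ∧ e - b * a ∈ (⊥ : Ideal R).jacobson ∧
      a - a * e ∈ (⊥ : Ideal R).jacobson := by
  obtain ⟨b, hb⟩ := h.1 a
  have hba : b * a * (b * a) - b * a ∈ (⊥ : Ideal R).jacobson := by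
    have : b * a * (b * a) - b * a = -(b * (a - a * b * a)) := by noncomm_ring
    exact this ▸ neg_mem (Ideal.mul_mem_left _ b hb)
  obtain ⟨e, he, heJ⟩ := h.2 (b * a) hba
  refine ⟨e, b, he, heJ, ?_⟩
  have : a - a * e = (a - a * b * a) - a * (e - b * a) := by noncomm_ring
  exact this ▸ sub_mem hb (Ideal.mul_mem_left _ a heJ)

theorem IsAbelianRing.isTwoSided_of_jacobson_le (hab : IsAbelianRing R)
    (hsr : IsSemiregularRing R) {I : Ideal R} (hI : (⊥ : Ideal R).jacobson ≤ I) :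
    I.IsTwoSided := by
  refine ⟨fun {a} r ha => ?_⟩
  obtain ⟨e, b, he, heJ, haJ⟩ := hsr.exists_isIdempotentElem_sub_mul_mem_jacobson a
  have heI : e ∈ I := by
    have : e = b * a + (e - b * a) := by abel
    exact this ▸ add_mem (I.mul_mem_left b ha) (hI heJ)
  have : a * r = a * r * e + (a - a * e) * r := by
    rw [mul_assoc a r e, ← hab e he r]; noncomm_ring
  exact this ▸ add_mem (I.mul_mem_left _ heI) (hI (Ideal.mul_mem_right r _ haJ))

end Ring

theorem Ideal.IsMaximal.isPrime_of_isTwoSided {R : Type*} [Semiring R] {M : Ideal R}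
    [M.IsTwoSided] (hM : M.IsMaximal) : M.IsPrime := by
  refine ⟨hM.ne_top, fun {a b} hab => or_iff_not_imp_left.2 fun ha => ?_⟩
  obtain ⟨y, m, hm, hym⟩ := hM.exists_inv ha
  have : b = y * (a * b) + m * b := by rw [← mul_assoc, ← add_mul, hym, one_mul]
  exact this ▸ add_mem (M.mul_mem_left y hab) (Ideal.mul_mem_right b M hm)

theorem IsAbelianRing.isTwoSided_isPrime_of_isMaximal {R : Type*} [Ring R]
    (hab : IsAbelianRing R) (hsr : IsSemiregularRing R) {M : Ideal R} (hM : M.IsMaximal) :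
    M.IsTwoSided ∧ M.IsPrime :=
  have := hab.isTwoSided_of_jacobson_le hsr (sInf_le ⟨bot_le, hM⟩)
  ⟨this, hM.isPrime_of_isTwoSided⟩

/-- In an abelian semi-regular ring, every maximal left ideal is a prime two-sided ideal,
and every maximal right ideal is a prime two-sided ideal. -/
theorem abelian_semiregular_maximal_isPrime (R : Type*) [Ring R]
    (hab : IsAbelianRing R) (hsr : IsSemiregularRing R) :
    (∀ M : Ideal R, M.IsMaximal →
      M ≠ ⊤ ∧ (∀ a ∈ M, ∀ r : R, a * r ∈ M) ∧
        ∀ a b : R, (∀ r : R, a * r * b ∈ M) → a ∈ M ∨ b ∈ M) ∧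
    (∀ M : Ideal Rᵐᵒᵖ, M.IsMaximal →
      M ≠ ⊤ ∧ (∀ a : R, MulOpposite.op a ∈ M → ∀ r : R, MulOpposite.op (r * a) ∈ M) ∧
        ∀ a b : R, (∀ r : R, MulOpposite.op (a * r * b) ∈ M) →
          MulOpposite.op a ∈ M ∨ MulOpposite.op b ∈ M) := by
  refine ⟨fun M hM => ?_, fun M hM => ?_⟩
  · obtain ⟨hTwo, hPrime⟩ := hab.isTwoSided_isPrime_of_isMaximal hsr hM
    refine ⟨hM.ne_top, fun a ha r => hTwo.mul_mem_of_left r ha, fun a b h => ?_⟩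
    exact hPrime.mem_or_mem' (by simpa using h 1)
  · obtain ⟨hTwo, hPrime⟩ := hab.op.isTwoSided_isPrime_of_isMaximal hsr.op hM
    refine ⟨hM.ne_top, fun a ha r => hTwo.mul_mem_of_left (op r) ha, fun a b h => ?_⟩
    exact (hPrime.mem_or_mem' (by simpa using h 1)).symm
end

section
/- Let G be a linearly ordered additive commutative group and let R be an abelian semi-regular ring with J(R) nilpotent. Then the Malcev-Neumann series ring R((G)) (the Hahn series ring over G with coefficients in R) is McCoy over R: whenever f, g are non-zero elements of R((G)) with f g = 0, there exists a non-zero element c ∈ R with f · c = 0, and there exists a non-zero element d ∈ R with d · g = 0. -/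
namespace Ideal

variable {R : Type*} [Ring R] {I : Ideal R}

theorem pow_le_span_list_prod [I.IsTwoSided] (k : ℕ) :
    I ^ k ≤ span {x | ∃ l : List R, l.length = k ∧ (∀ y ∈ l, y ∈ I) ∧ l.prod = x} := by
  induction k with
  | zero =>
    rw [Submodule.pow_zero, Ideal.one_eq_top, top_le_iff, Ideal.eq_top_iff_one]
    exact Ideal.subset_span ⟨[], rfl, by simp, rfl⟩
  | succ k ih =>
    intro x hx
    rw [Ideal.IsTwoSided.pow_succ] at hx
    have hx := Ideal.mul_mono_right ih hx
    rw [← Ideal.smul_eq_mul, Submodule.mem_smul_span] at hx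
    refine Submodule.span_mono ?_ hx
    rintro _ ⟨y, hy, _, ⟨l, rfl, hl, rfl⟩, rfl⟩
    exact ⟨y :: l, rfl, List.forall_mem_cons.2 ⟨hy, hl⟩, rfl⟩

theorem pow_eq_bot_of_list_prod_eq_zero [I.IsTwoSided] {n : ℕ}
    (h : ∀ l : List R, l.length = n → (∀ x ∈ l, x ∈ I) → l.prod = 0) : I ^ n = ⊥ := by
  refine eq_bot_iff.2 ((Ideal.pow_le_span_list_prod n).trans ?_)
  rw [Ideal.span_le]
  rintro _ ⟨l, hl, hmem, rfl⟩
  exact (Submodule.mem_bot R).2 (h l hl hmem)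

theorem exists_ne_zero_mem_forall_mul_eq_zero [I.IsTwoSided] {n : ℕ} (hI : I ^ n = ⊥)
    {K : Ideal R} (hK : K ≠ ⊥) : ∃ c ∈ K, c ≠ 0 ∧ ∀ j ∈ I, j * c = 0 := by
  classical
  have hex : ∃ k, I ^ k * K = ⊥ := ⟨n, by rw [hI, Ideal.bot_mul]⟩
  have h0 : Nat.find hex ≠ 0 := fun h0 => hK <| by
    have := Nat.find_spec hex
    rwa [h0, Submodule.pow_zero, Ideal.one_eq_top, Ideal.top_mul] at this
  obtain ⟨k, hk⟩ : ∃ k, Nat.find hex = k + 1 := Nat.exists_eq_succ_of_ne_zero h0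
  have hne : I ^ k * K ≠ ⊥ := Nat.find_min hex (by rw [hk]; exact k.lt_succ_self)
  obtain ⟨c, hc, hc0⟩ := Submodule.exists_mem_ne_zero_of_ne_bot hne
  refine ⟨c, Ideal.mul_le_right hc, hc0, fun j hj => ?_⟩
  have : j * c ∈ I ^ (k + 1) * K := by
    rw [Ideal.IsTwoSided.pow_succ, Ideal.mul_assoc]; exact Ideal.mul_mem_mul hj hc
  rwa [← hk, Nat.find_spec hex, Submodule.mem_bot] at this

theorem mul_eq_zero_of_mul_mem_mul_span {n : ℕ} (hI : I ^ n = ⊥) {e : R}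
    (he : IsIdempotentElem e) (hcen : ∀ r, e * r = r * e) {s : Set R}
    (hs : ∀ x ∈ s, e * x ∈ I * span s) : ∀ x ∈ span s, e * x = 0 := by
  set K := span s
  have hK : ∀ x ∈ K, e * x ∈ I * K := fun x hx => by
    induction hx using Submodule.span_induction with
    | mem x hx => exact hs x hx
    | zero => simp
    | add x y _ _ hx hy => rw [mul_add]; exact add_mem hx hy
    | smul r x _ hx =>
      rw [smul_eq_mul, ← mul_assoc, hcen, mul_assoc]; exact Ideal.mul_mem_left _ r hx
  have hstep : ∀ k, ∀ y ∈ I ^ k * K, e * y ∈ I ^ (k + 1) * K := fun k y hy => by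
    refine Submodule.smul_induction_on (p := fun y => e * y ∈ I ^ (k + 1) * K) hy ?_ ?_
    · intro r hr x hx
      rw [smul_eq_mul, ← mul_assoc, hcen, mul_assoc, Submodule.pow_succ, Ideal.mul_assoc]
      exact Ideal.mul_mem_mul hr (hK x hx)
    · intro x y hx hy
      rw [mul_add]; exact add_mem hx hy
  intro x hx
  have hpow : ∀ k, e * x ∈ I ^ (k + 1) * K := fun k => by
    induction k with
    | zero => rw [zero_add, Submodule.pow_one]; exact hK x hx
    | succ k ih => rw [← he.eq, mul_assoc]; exact hstep _ _ ih
  have hbot : I ^ (n + 1) = ⊥ := le_bot_iff.1 ((Ideal.pow_le_pow_right n.le_succ).trans hI.le)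
  simpa [hbot] using hpow n

end Ideal

theorem mul_comm_of_mul_mul_eq_self {Q : Type*} [Semigroup Q]
    (hQ : ∀ e : Q, IsIdempotentElem e → ∀ r, e * r = r * e) {a b : Q} (h : a * b * a = a) :
    a * b = b * a := by
  have hab : IsIdempotentElem (a * b) := by rw [IsIdempotentElem, ← mul_assoc, h]
  have hba : IsIdempotentElem (b * a) := by
    rw [IsIdempotentElem, mul_assoc, ← mul_assoc a, h]
  calc a * b = a * (b * a) * b := by rw [← mul_assoc, h]
    _ = b * a * (a * b) := by rw [← hQ _ hba a, mul_assoc, mul_assoc]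
    _ = b * (a * (a * b)) := by rw [mul_assoc]
    _ = b * a := by rw [← hQ _ hab a, h]

namespace IsSemiregularRing

variable {R : Type*} [Ring R]

theorem isIdempotentElem_quotient_mul_comm (hab : IsAbelianRing R) (hsr : IsSemiregularRing R)
    (e : R ⧸ (⊥ : Ideal R).jacobson) (he : IsIdempotentElem e) (r : R ⧸ (⊥ : Ideal R).jacobson) :
    e * r = r * e := by
  obtain ⟨u, rfl⟩ := Ideal.Quotient.mk_surjective e
  obtain ⟨r, rfl⟩ := Ideal.Quotient.mk_surjective r
  obtain ⟨e, he', heu⟩ := hsr.2 u (by rw [← Ideal.Quotient.eq, map_mul]; exact he)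
  rw [← Ideal.Quotient.eq.2 heu, ← map_mul, ← map_mul, hab e he' r]

theorem exists_central_idempotent (hab : IsAbelianRing R) (hsr : IsSemiregularRing R) (a : R) :
    ∃ e b : R, IsIdempotentElem e ∧ (∀ r, e * r = r * e) ∧
      e - a * b ∈ (⊥ : Ideal R).jacobson ∧ e - b * a ∈ (⊥ : Ideal R).jacobson ∧
      e * a - a ∈ (⊥ : Ideal R).jacobson := by
  obtain ⟨b, hb⟩ := hsr.1 a
  set π := Ideal.Quotient.mk (⊥ : Ideal R).jacobson
  have hreg : π a * π b * π a = π a := by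
    rw [← map_mul, ← map_mul, Ideal.Quotient.eq, ← neg_sub]; exact neg_mem hb
  have hcomm : π (a * b) = π (b * a) := by
    rw [map_mul, map_mul]
    exact mul_comm_of_mul_mul_eq_self (isIdempotentElem_quotient_mul_comm hab hsr) hreg
  obtain ⟨e, he, hea⟩ := hsr.2 (a * b) <| by
    rw [← Ideal.Quotient.eq, map_mul, map_mul, ← mul_assoc, hreg]
  have hπe : π e = π (a * b) := Ideal.Quotient.eq.2 hea
  refine ⟨e, b, he, hab e he, Ideal.Quotient.eq.1 hπe, Ideal.Quotient.eq.1 (hπe.trans hcomm), ?_⟩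
  rw [← Ideal.Quotient.eq, map_mul, hπe, map_mul, hreg]

end IsSemiregularRing

namespace HahnSeries

theorem coeff_induction {Γ R : Type*} [PartialOrder Γ] [Zero R] (f : HahnSeries Γ R)
    {P : Γ → Prop} (hzero : ∀ s, f.coeff s = 0 → P s) (hstep : ∀ s, (∀ i < s, P i) → P s)
    (s : Γ) : P s := by
  by_cases hs : f.coeff s = 0
  · exact hzero s hs
  refine Set.WellFoundedOn.induction f.isWF_support hs fun y _ ih => hstep y fun i hi => ?_
  by_cases hi0 : f.coeff i = 0
  · exact hzero i hi0
  · exact ih i hi0 hi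

theorem map_opAddEquiv_mul {Γ R : Type*} [AddCommMonoid Γ] [PartialOrder Γ]
    [IsOrderedCancelAddMonoid Γ] [NonUnitalNonAssocSemiring R] (f g : HahnSeries Γ R) :
    (f * g).map (MulOpposite.opAddEquiv : R ≃+ Rᵐᵒᵖ) =
      g.map MulOpposite.opAddEquiv * f.map MulOpposite.opAddEquiv := by
  ext a
  simp only [map_coeff, coeff_mul, map_sum, MulOpposite.opAddEquiv_apply, MulOpposite.op_mul]
  exact Finset.sum_equiv (Equiv.prodComm _ _) (fun x => by simp [add_comm, and_left_comm])
    (fun _ _ => rfl)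

variable {Γ R : Type*} [AddCommMonoid Γ] [LinearOrder Γ] [IsOrderedCancelAddMonoid Γ] [Ring R]

theorem coeff_mul_coeff_mem_of_mul_eq_zero {S : Type*} [SetLike S R] [AddSubgroupClass S R]
    (P : S) {f g : HahnSeries Γ R} (hfg : f * g = 0) {s t : Γ}
    (hlt : ∀ i < s, ∀ j, f.coeff i * g.coeff j ∈ P)
    (hgt : ∀ j < t, ∀ i, f.coeff i * g.coeff j ∈ P) :
    f.coeff s * g.coeff t ∈ P := by
  classical
  set A := Finset.antidiagonal f.isPWO_support g.isPWO_support (s + t)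
  have hsum : ∑ x ∈ A, f.coeff x.1 * g.coeff x.2 = 0 := by rw [← coeff_mul, hfg, coeff_zero]
  have hrest : ∀ x ∈ A.erase (s, t), f.coeff x.1 * g.coeff x.2 ∈ P := by
    intro x hx
    obtain ⟨hne, hxA⟩ := Finset.mem_erase.1 hx
    obtain ⟨-, -, hx⟩ := Finset.mem_antidiagonal.1 hxA
    rcases lt_trichotomy x.1 s with h | h | h
    · exact hlt _ h _
    · exact absurd (Prod.ext h (add_left_cancel (h ▸ hx))) hne
    · refine hgt _ ((lt_or_ge x.2 t).resolve_right fun h' => ?_) _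
      exact (add_lt_add_of_lt_of_le h h').ne' hx
  by_cases hst : (s, t) ∈ A
  · rw [← Finset.add_sum_erase A _ hst, add_eq_zero_iff_eq_neg] at hsum
    rw [hsum]
    exact neg_mem (sum_mem hrest)
  · have : f.coeff s = 0 ∨ g.coeff t = 0 := by
      simp only [A, Finset.mem_antidiagonal, mem_support] at hst
      tauto
    rcases this with h | h <;> simp [h, zero_mem]

theorem mul_coeff_mem_mul_span_of_sub_mul_coeff_mem (I : Ideal R) {f g : HahnSeries Γ R}
    (hfg : f * g = 0) {s : Γ} {e c : R} (he : IsIdempotentElem e) (hcen : ∀ r, e * r = r * e)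
    (hec : e - c * f.coeff s ∈ I)
    (hlt : ∀ i < s, ∀ j, f.coeff i * g.coeff j ∈ I * Ideal.span (Set.range g.coeff)) (t : Γ) :
    e * g.coeff t ∈ I * Ideal.span (Set.range g.coeff) := by
  set K := Ideal.span (Set.range g.coeff)
  have hgK : ∀ j, g.coeff j ∈ K := fun j => Ideal.subset_span ⟨j, rfl⟩
  refine g.coeff_induction (P := fun t => e * g.coeff t ∈ I * K) (fun t ht => by simp [ht])
    (fun t ih => ?_) t
  have hlead : e * f.coeff s * g.coeff t ∈ I * K := by
    have hCf : ∀ i, (C e * f).coeff i = e * f.coeff i := fun i => by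
      rw [C_mul_eq_smul, coeff_smul, smul_eq_mul]
    have hCfg : C e * f * g = 0 := by rw [mul_assoc, hfg, mul_zero]
    simpa only [hCf] using coeff_mul_coeff_mem_of_mul_eq_zero (I * K) hCfg
      (fun i hi j => by rw [hCf, mul_assoc]; exact Ideal.mul_mem_left _ e (hlt i hi j))
      (fun j hj i => by rw [hCf, hcen, mul_assoc]; exact Ideal.mul_mem_left _ _ (ih j hj))
  have hsplit : e * g.coeff t =
      (e - c * f.coeff s) * (e * g.coeff t) + c * (e * f.coeff s * g.coeff t) := by
    rw [hcen (f.coeff s)]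
    conv_lhs => rw [← he.eq]
    noncomm_ring
  rw [hsplit]
  exact add_mem (Ideal.mul_mem_mul hec (Ideal.mul_mem_left _ e (hgK t)))
    (Ideal.mul_mem_left _ c hlead)

theorem exists_central_left_annihilator_of_mul_eq_zero (I : Ideal R) {n : ℕ} (hI : I ^ n = ⊥)
    (hdecomp : ∀ a : R, ∃ e c : R, IsIdempotentElem e ∧ (∀ r, e * r = r * e) ∧
      e - c * a ∈ I ∧ e * a - a ∈ I)
    {f g : HahnSeries Γ R} (hfg : f * g = 0) (s : Γ) :
    ∃ e : R, (∀ r, e * r = r * e) ∧ e * f.coeff s - f.coeff s ∈ I ∧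
      ∀ x ∈ Ideal.span (Set.range g.coeff), e * x = 0 := by
  set K := Ideal.span (Set.range g.coeff)
  have hgK : ∀ j, g.coeff j ∈ K := fun j => Ideal.subset_span ⟨j, rfl⟩
  refine f.coeff_induction (P := fun s => ∃ e : R, (∀ r, e * r = r * e) ∧
      e * f.coeff s - f.coeff s ∈ I ∧ ∀ x ∈ K, e * x = 0)
    (fun s hs => ⟨0, by simp, by simp [hs], by simp⟩) (fun s ih => ?_) s
  have hlt : ∀ i < s, ∀ j, f.coeff i * g.coeff j ∈ I * K := by
    intro i hi j
    obtain ⟨e, hcen, hea, hker⟩ := ih i hi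
    have hsplit : f.coeff i * g.coeff j =
        -((e * f.coeff i - f.coeff i) * g.coeff j) + f.coeff i * (e * g.coeff j) := by
      rw [← mul_assoc, ← hcen]; noncomm_ring
    rw [hsplit, hker _ (hgK j), mul_zero, add_zero]
    exact neg_mem (Ideal.mul_mem_mul hea (hgK j))
  obtain ⟨e, c, he, hcen, hec, hea⟩ := hdecomp (f.coeff s)
  refine ⟨e, hcen, hea, Ideal.mul_eq_zero_of_mul_mem_mul_span hI he hcen ?_⟩
  rintro _ ⟨t, rfl⟩
  exact mul_coeff_mem_mul_span_of_sub_mul_coeff_mem I hfg he hcen hec hlt t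

theorem exists_ne_zero_forall_coeff_mul_eq_zero (J : Ideal R) [J.IsTwoSided] {n : ℕ}
    (hJ : ∀ l : List R, l.length = n → (∀ x ∈ l, x ∈ J) → l.prod = 0)
    (hdecomp : ∀ a : R, ∃ e c : R, IsIdempotentElem e ∧ (∀ r, e * r = r * e) ∧
      e - c * a ∈ J ∧ e * a - a ∈ J)
    {f g : HahnSeries Γ R} (hfg : f * g = 0) (hg : g ≠ 0) :
    ∃ c : R, c ≠ 0 ∧ ∀ s, f.coeff s * c = 0 := by
  have hJn : J ^ n = ⊥ := Ideal.pow_eq_bot_of_list_prod_eq_zero hJ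
  have hK : Ideal.span (Set.range g.coeff) ≠ ⊥ := by
    obtain ⟨t, ht⟩ : ∃ t, g.coeff t ≠ 0 := by
      by_contra! h; exact hg (HahnSeries.ext (funext h))
    exact fun h => ht ((Submodule.mem_bot R).1 (h ▸ Ideal.subset_span ⟨t, rfl⟩))
  obtain ⟨c, hcK, hc0, hJc⟩ := Ideal.exists_ne_zero_mem_forall_mul_eq_zero hJn hK
  refine ⟨c, hc0, fun s => ?_⟩
  obtain ⟨e, hcen, hea, hker⟩ := exists_central_left_annihilator_of_mul_eq_zero J hJn hdecomp hfg s
  calc f.coeff s * c = -((e * f.coeff s - f.coeff s) * c) + f.coeff s * (e * c) := by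
        rw [← mul_assoc, ← hcen]; noncomm_ring
    _ = 0 := by rw [hJc _ hea, hker c hcK, neg_zero, mul_zero, add_zero]

theorem exists_ne_zero_forall_mul_coeff_eq_zero (J : Ideal R) [J.IsTwoSided] {n : ℕ}
    (hJ : ∀ l : List R, l.length = n → (∀ x ∈ l, x ∈ J) → l.prod = 0)
    (hdecomp : ∀ a : R, ∃ e c : R, IsIdempotentElem e ∧ (∀ r, e * r = r * e) ∧
      e - a * c ∈ J ∧ a * e - a ∈ J)
    {f g : HahnSeries Γ R} (hfg : f * g = 0) (hf : f ≠ 0) :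
    ∃ d : R, d ≠ 0 ∧ ∀ s, d * g.coeff s = 0 := by
  set φ : R ≃+ Rᵐᵒᵖ := MulOpposite.opAddEquiv
  set Jop : Ideal Rᵐᵒᵖ := J.toTwoSided.op.asIdeal
  have hmem : ∀ x : Rᵐᵒᵖ, x ∈ Jop ↔ x.unop ∈ J := fun x => by
    rw [TwoSidedIdeal.mem_asIdeal, TwoSidedIdeal.mem_op_iff, Ideal.mem_toTwoSided]
  have hJop : ∀ l : List Rᵐᵒᵖ, l.length = n → (∀ x ∈ l, x ∈ Jop) → l.prod = 0 := by
    intro l hl hl'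
    rw [← MulOpposite.unop_inj, MulOpposite.unop_list_prod, MulOpposite.unop_zero]
    exact hJ _ (by simpa using hl) (by simpa [hmem] using hl')
  have hdecomp_op : ∀ a : Rᵐᵒᵖ, ∃ e c : Rᵐᵒᵖ, IsIdempotentElem e ∧ (∀ r, e * r = r * e) ∧
      e - c * a ∈ Jop ∧ e * a - a ∈ Jop := by
    intro a
    obtain ⟨e, c, he, hcen, hec, hae⟩ := hdecomp a.unop
    refine ⟨.op e, .op c, congrArg MulOpposite.op he.eq,
      fun r => MulOpposite.unop_injective (hcen r.unop).symm, ?_, ?_⟩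
    · simpa [hmem] using hec
    · simpa [hmem] using hae
  have hgf : g.map φ * f.map φ = 0 := by rw [← map_opAddEquiv_mul, hfg]; rfl
  have hf' : f.map φ ≠ 0 := by
    intro h; apply hf; ext s; simpa [φ] using congrArg (fun x => (x.coeff s).unop) h
  obtain ⟨c, hc0, hc⟩ := exists_ne_zero_forall_coeff_mul_eq_zero Jop hJop hdecomp_op hgf hf'
  refine ⟨c.unop, by simpa using hc0, fun s => ?_⟩
  simpa [φ] using congrArg MulOpposite.unop (hc s)

end HahnSeries

/-- Let `G` be a linearly ordered additive commutative group and `R` an abelian semi-regular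
ring with `J(R)` nilpotent.  Then the Malcev–Neumann series ring `R((G))` (Hahn series over
`G`) is McCoy over `R`: if `f * g = 0` with `f, g ≠ 0`, then some non-zero `c ∈ R`
annihilates `f` on the right and some non-zero `d ∈ R` annihilates `g` on the left. -/
theorem malcevNeumann_mccoy (G R : Type*)
    [AddCommGroup G] [LinearOrder G] [IsOrderedAddMonoid G] [Ring R]
    (hab : IsAbelianRing R) (hsr : IsSemiregularRing R) (hnil : JacobsonNilpotent R)
    (f g : HahnSeries G R) (hf : f ≠ 0) (hg : g ≠ 0) (hfg : f * g = 0) :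
    (∃ c : R, c ≠ 0 ∧ ∀ s : G, f.coeff s * c = 0) ∧
    (∃ d : R, d ≠ 0 ∧ ∀ s : G, d * g.coeff s = 0) := by
  obtain ⟨n, -, hJ⟩ := hnil
  have hdecomp := hsr.exists_central_idempotent hab
  refine ⟨HahnSeries.exists_ne_zero_forall_coeff_mul_eq_zero _ hJ (fun a => ?_) hfg hg,
    HahnSeries.exists_ne_zero_forall_mul_coeff_eq_zero _ hJ (fun a => ?_) hfg hf⟩
  · obtain ⟨e, b, he, hcen, -, hba, hea⟩ := hdecomp a
    exact ⟨e, b, he, hcen, hba, hea⟩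
  · obtain ⟨e, b, he, hcen, heab, -, hea⟩ := hdecomp a
    exact ⟨e, b, he, hcen, heab, hcen a ▸ hea⟩
end
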